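/- arXiv:1410.7191 — 2 statements merged into one kernel-verified Lean document; each statement's English description precedes it below -/
import Mathlib

section
/- Ramanujan's identity for E₂: the normalized quasimodular Eisenstein series satisfies q dE₂/dq = (E₂² − E₄)/12, i.e., (1/2πi) dE₂/dτ = (E₂² − E₄)/12. -/
/-!
Since `E₂ = 1 - 24 ∑ σ₁(n) qⁿ`, `E₄ = 1 + 240 ∑ σ₃(n) qⁿ` and `(2πi)⁻¹ d/dτ` multiplies the
`n`-th coefficient by `n`, the identity amounts, coefficient by coefficient, to Besge's formula
`12 ∑_{i+j=n} σ₁(i) σ₁(j) = 5 σ₃(n) + (1 - 6n) σ₁(n)`.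
Its left side is `12 ∑ ab` over the positive solutions of `ax + by = n`. Splitting these solutions
by comparing `x` with `y`, or `a` with `b`, and using the symmetry `(a, x) ↔ (b, y)` together with
the Euclidean step `(a, x, b, y) ↦ (b - a, y, a, x + y)`, which maps `{a < b}` onto `{x < y}`,
reduces suitable weighted sums to the diagonals `x = y` and `a = b`, which are explicit divisor
sums.
-/

open Complex Real

/-- The normalized quasimodular Eisenstein series E₂, via its q-expansion. -/
noncomputable def E2 (τ : ℂ) : ℂ :=
  1 - 24 * ∑' n : ℕ, (ArithmeticFunction.sigma 1 (n + 1) : ℂ) *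
    Complex.exp (2 * (π : ℂ) * Complex.I * τ) ^ (n + 1)

/-- The normalized Eisenstein series E₄, via its q-expansion. -/
noncomputable def E4 (τ : ℂ) : ℂ :=
  1 + 240 * ∑' n : ℕ, (ArithmeticFunction.sigma 3 (n + 1) : ℂ) *
    Complex.exp (2 * (π : ℂ) * Complex.I * τ) ^ (n + 1)

/-- The normalized Eisenstein series E₆, via its q-expansion. -/
noncomputable def E6 (τ : ℂ) : ℂ :=
  1 - 504 * ∑' n : ℕ, (ArithmeticFunction.sigma 5 (n + 1) : ℂ) *
    Complex.exp (2 * (π : ℂ) * Complex.I * τ) ^ (n + 1)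

open Finset ArithmeticFunction
open scoped ArithmeticFunction.sigma

theorem Finset.sum_eq_sum_filter_lt_add_sum_filter_eq_of_swap_mem {γ β M : Type*} [LinearOrder β]
    [AddCommMonoid M] {s : Finset (γ × γ)} (hs : ∀ p ∈ s, p.swap ∈ s) (g : γ → β)
    (f : γ × γ → M) :
    ∑ p ∈ s, f p =
      ∑ p ∈ s with g p.1 < g p.2, (f p + f p.swap) + ∑ p ∈ s with g p.1 = g p.2, f p := by
  have hgt : ∑ p ∈ s with g p.2 < g p.1, f p = ∑ p ∈ s with g p.1 < g p.2, f p.swap :=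
    sum_nbij' Prod.swap Prod.swap (fun p hp => by simp_all) (fun p hp => by simp_all)
      (fun _ _ => rfl) (fun _ _ => rfl) (fun _ _ => rfl)
  have hne : ∑ p ∈ s with ¬ g p.1 < g p.2, f p =
      ∑ p ∈ s with g p.2 < g p.1, f p + ∑ p ∈ s with g p.1 = g p.2, f p := by
    rw [← sum_filter_add_sum_filter_not (s.filter _) (fun p => g p.2 < g p.1), filter_filter,
      filter_filter]
    congr 2 <;> exact filter_congr fun p _ => by grind
  rw [sum_add_distrib, ← hgt, add_assoc, ← hne, sum_filter_add_sum_filter_not]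

theorem ArithmeticFunction.natCast_sigma_apply {R : Type*} [CommSemiring R] (k n : ℕ) :
    ((σ k n : ℕ) : R) = ∑ d ∈ n.divisors, (d : R) ^ k := by
  simp [sigma_apply]

theorem two_mul_sum_Ico_one_natCast : ∀ d : ℕ, 2 * ∑ a ∈ Ico 1 d, (a : ℤ) = d ^ 2 - d
  | 0 => by simp
  | d + 1 => by
    rcases d.eq_zero_or_pos with rfl | hd
    · simp
    rw [sum_Ico_succ_top hd, mul_add, two_mul_sum_Ico_one_natCast d]
    push_cast
    ring

theorem six_mul_sum_Ico_one_natCast_sq :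
    ∀ d : ℕ, 6 * ∑ a ∈ Ico 1 d, (a : ℤ) ^ 2 = 2 * d ^ 3 - 3 * d ^ 2 + d
  | 0 => by simp
  | d + 1 => by
    rcases d.eq_zero_or_pos with rfl | hd
    · simp
    rw [sum_Ico_succ_top hd, mul_add, six_mul_sum_Ico_one_natCast_sq d]
    push_cast
    ring

namespace Besge

def quadruples (n : ℕ) : Finset ((ℕ × ℕ) × ℕ × ℕ) :=
  ((Icc 1 n ×ˢ Icc 1 n) ×ˢ Icc 1 n ×ˢ Icc 1 n).filter
    fun p => p.1.1 * p.1.2 + p.2.1 * p.2.2 = n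

@[simp]
theorem mem_quadruples {n a x b y : ℕ} :
    ((a, x), (b, y)) ∈ quadruples n ↔ 0 < a ∧ 0 < x ∧ 0 < b ∧ 0 < y ∧ a * x + b * y = n := by
  simp only [quadruples, mem_filter, mem_product, mem_Icc]
  constructor
  · rintro ⟨⟨⟨⟨ha, -⟩, hx, -⟩, ⟨hb, -⟩, hy, -⟩, hn⟩
    exact ⟨ha, hx, hb, hy, hn⟩
  · rintro ⟨ha, hx, hb, hy, hn⟩
    have := Nat.le_mul_of_pos_right a hx
    have := Nat.le_mul_of_pos_left x ha
    have := Nat.le_mul_of_pos_right b hy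
    have := Nat.le_mul_of_pos_left y hb
    omega

theorem swap_mem_quadruples {n : ℕ} {p : (ℕ × ℕ) × ℕ × ℕ} (hp : p ∈ quadruples n) :
    p.swap ∈ quadruples n := by
  obtain ⟨⟨a, x⟩, b, y⟩ := p
  simp only [Prod.swap_prod_mk, mem_quadruples] at hp ⊢
  omega

section AddCommMonoid

variable {M : Type*} [AddCommMonoid M]

theorem sum_quadruples_filter_fst_lt (n : ℕ) (F : (ℕ × ℕ) × ℕ × ℕ → M) :
    ∑ p ∈ quadruples n with p.1.1 < p.2.1, F p =
      ∑ p ∈ quadruples n with p.1.2 < p.2.2,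
        F ((p.2.1, p.2.2 - p.1.2), (p.1.1 + p.2.1, p.1.2)) := by
  apply sum_nbij' (fun p => ((p.2.1 - p.1.1, p.2.2), (p.1.1, p.1.2 + p.2.2)))
    (fun p => ((p.2.1, p.2.2 - p.1.2), (p.1.1 + p.2.1, p.1.2)))
  all_goals rintro ⟨⟨a, x⟩, b, y⟩ hp
  all_goals simp only [mem_filter, mem_quadruples, Prod.mk.injEq] at hp ⊢
  · obtain ⟨⟨ha, hx, -, hy, rfl⟩, hab⟩ := hp
    obtain ⟨c, rfl⟩ := Nat.exists_eq_add_of_lt hab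
    refine ⟨⟨by omega, hy, ha, by omega, ?_⟩, by omega⟩
    rw [show a + c + 1 - a = c + 1 by omega]
    ring
  · obtain ⟨⟨ha, hx, hb, -, rfl⟩, hxy⟩ := hp
    obtain ⟨c, rfl⟩ := Nat.exists_eq_add_of_lt hxy
    refine ⟨⟨hb, by omega, by omega, hx, ?_⟩, by omega⟩
    rw [show x + c + 1 - x = c + 1 by omega]
    ring
  · simp only [and_true, true_and]; omega
  · simp only [and_true, true_and]; omega
  · rw [Nat.add_sub_cancel, Nat.sub_add_cancel hp.2.le]

theorem sum_quadruples_eq_sum_snd_lt_add_sum_snd_eq (n : ℕ) (φ : ℕ → ℕ → M) :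
    ∑ p ∈ quadruples n, φ p.1.1 p.2.1 =
      ∑ p ∈ quadruples n with p.1.2 < p.2.2, (φ p.1.1 p.2.1 + φ p.2.1 p.1.1) +
      ∑ p ∈ quadruples n with p.1.2 = p.2.2, φ p.1.1 p.2.1 :=
  sum_eq_sum_filter_lt_add_sum_filter_eq_of_swap_mem (fun _ => swap_mem_quadruples) Prod.snd _

theorem sum_quadruples_eq_sum_snd_lt_add_sum_fst_eq (n : ℕ) (φ : ℕ → ℕ → M) :
    ∑ p ∈ quadruples n, φ p.1.1 p.2.1 =
      ∑ p ∈ quadruples n with p.1.2 < p.2.2,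
        (φ p.2.1 (p.1.1 + p.2.1) + φ (p.1.1 + p.2.1) p.2.1) +
      ∑ p ∈ quadruples n with p.1.1 = p.2.1, φ p.1.1 p.2.1 := by
  rw [sum_eq_sum_filter_lt_add_sum_filter_eq_of_swap_mem (fun _ => swap_mem_quadruples) Prod.fst,
    sum_quadruples_filter_fst_lt]
  rfl

theorem sum_quadruples_filter_snd_eq (n : ℕ) (φ : ℕ → ℕ → M) :
    ∑ p ∈ quadruples n with p.1.2 = p.2.2, φ p.1.1 p.2.1 =
      ∑ d ∈ n.divisors, ∑ a ∈ Ico 1 d, φ a (d - a) := by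
  rw [sum_sigma']
  apply sum_nbij' (fun p => ⟨p.1.1 + p.2.1, p.1.1⟩)
    (fun q => ((q.2, n / q.1), (q.1 - q.2, n / q.1)))
  · rintro ⟨⟨a, x⟩, b, y⟩ hp
    simp only [mem_filter, mem_quadruples] at hp
    obtain ⟨⟨ha, hx, hb, -, rfl⟩, rfl⟩ := hp
    simp only [mem_sigma, Nat.mem_divisors, mem_Ico]
    refine ⟨⟨⟨x, by ring⟩, by positivity⟩, ha, by omega⟩
  · rintro ⟨d, a⟩ hq
    simp only [mem_sigma, Nat.mem_divisors, mem_Ico] at hq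
    obtain ⟨⟨⟨x, rfl⟩, hn⟩, ha, had⟩ := hq
    have hx : 0 < x := Nat.pos_of_ne_zero (by rintro rfl; simp at hn)
    simp only [mem_filter, mem_quadruples, Nat.mul_div_cancel_left x (by omega : 0 < d)]
    refine ⟨⟨ha, hx, by omega, hx, ?_⟩, trivial⟩
    rw [← add_mul, Nat.add_sub_cancel' had.le]
  · rintro ⟨⟨a, x⟩, b, y⟩ hp
    simp only [mem_filter, mem_quadruples] at hp
    obtain ⟨⟨ha, hx, hb, -, rfl⟩, rfl⟩ := hp
    simp [← add_mul, Nat.mul_div_cancel_left x (by omega : 0 < a + b)]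
  · rintro ⟨d, a⟩ hq
    simp only [mem_sigma, mem_Ico] at hq
    simp [Nat.add_sub_cancel' hq.2.2.le]
  · rintro ⟨⟨a, x⟩, b, y⟩ -
    simp

theorem sum_quadruples_filter_fst_eq (n : ℕ) (φ : ℕ → ℕ → M) :
    ∑ p ∈ quadruples n with p.1.1 = p.2.1, φ p.1.1 p.2.1 =
      ∑ d ∈ n.divisors, (n / d - 1) • φ d d := by
  have hreindex : ∑ p ∈ quadruples n with p.1.1 = p.2.1, φ p.1.1 p.2.1 =
      ∑ d ∈ n.divisors, ∑ _x ∈ Ico 1 (n / d), φ d d := by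
    rw [sum_sigma']
    apply sum_nbij' (fun p => ⟨p.1.1, p.1.2⟩) (fun q => ((q.1, q.2), (q.1, n / q.1 - q.2)))
    · rintro ⟨⟨a, x⟩, b, y⟩ hp
      simp only [mem_filter, mem_quadruples] at hp
      obtain ⟨⟨ha, hx, -, hy, rfl⟩, rfl⟩ := hp
      simp only [mem_sigma, Nat.mem_divisors, mem_Ico, ← mul_add,
        Nat.mul_div_cancel_left _ ha]
      refine ⟨⟨⟨x + y, rfl⟩, by positivity⟩, hx, by omega⟩
    · rintro ⟨d, x⟩ hq
      simp only [mem_sigma, Nat.mem_divisors, mem_Ico] at hq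
      obtain ⟨⟨⟨m, rfl⟩, hn⟩, hx, hxm⟩ := hq
      have hd : 0 < d := Nat.pos_of_ne_zero (by rintro rfl; simp at hn)
      simp only [Nat.mul_div_cancel_left m hd] at hxm ⊢
      simp only [mem_filter, mem_quadruples]
      refine ⟨⟨hd, hx, hd, by omega, ?_⟩, trivial⟩
      rw [← mul_add, Nat.add_sub_cancel' hxm.le]
    · rintro ⟨⟨a, x⟩, b, y⟩ hp
      simp only [mem_filter, mem_quadruples] at hp
      obtain ⟨⟨ha, hx, -, hy, rfl⟩, rfl⟩ := hp
      simp [← mul_add, Nat.mul_div_cancel_left _ ha]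
    · rintro ⟨d, x⟩ -
      rfl
    · rintro ⟨⟨a, x⟩, b, y⟩ hp
      simp only [mem_filter, mem_quadruples] at hp
      rw [hp.2]
  rw [hreindex]
  simp

end AddCommMonoid

theorem sum_quadruples_filter_fst_eq_sub_sum_filter_snd_eq {G : Type*} [AddCommGroup G] (n : ℕ)
    (φ : ℕ → ℕ → G) :
    ∑ p ∈ quadruples n with p.1.1 = p.2.1, φ p.1.1 p.2.1 -
        ∑ p ∈ quadruples n with p.1.2 = p.2.2, φ p.1.1 p.2.1 =
      ∑ p ∈ quadruples n with p.1.2 < p.2.2,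
        (φ p.1.1 p.2.1 + φ p.2.1 p.1.1 - φ p.2.1 (p.1.1 + p.2.1) - φ (p.1.1 + p.2.1) p.2.1) := by
  have h := (sum_quadruples_eq_sum_snd_lt_add_sum_snd_eq n φ).symm.trans
    (sum_quadruples_eq_sum_snd_lt_add_sum_fst_eq n φ)
  simp only [sub_sub, sum_sub_distrib]
  rw [sub_eq_sub_iff_add_eq_add, add_comm]
  exact h.symm

theorem six_mul_diagonal_contribution {n d : ℕ} (hd : d ∈ n.divisors) :
    6 * ((n / d - 1) • ((d * d - 2 * d ^ 2 : ℤ)) -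
        ∑ a ∈ Ico 1 d, (a * (d - a : ℕ) - 2 * a ^ 2 : ℤ) +
        2 * ∑ a ∈ Ico 1 d, (a * (d - a : ℕ) : ℤ)) = 5 * d ^ 3 + d - 6 * n * d := by
  obtain ⟨⟨m, rfl⟩, hn⟩ := Nat.mem_divisors.mp hd
  have hm : 1 ≤ m := Nat.pos_of_ne_zero (by rintro rfl; simp at hn)
  have hd : 0 < d := Nat.pos_of_ne_zero (by rintro rfl; simp at hn)
  have hinner : -∑ a ∈ Ico 1 d, (a * (d - a : ℕ) - 2 * a ^ 2 : ℤ) +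
      2 * ∑ a ∈ Ico 1 d, (a * (d - a : ℕ) : ℤ) =
      d * ∑ a ∈ Ico 1 d, (a : ℤ) + ∑ a ∈ Ico 1 d, (a : ℤ) ^ 2 := by
    rw [mul_sum, mul_sum, ← sum_neg_distrib, ← sum_add_distrib, ← sum_add_distrib]
    refine sum_congr rfl fun a ha => ?_
    rw [Nat.cast_sub (mem_Ico.mp ha).2.le]
    ring
  rw [Nat.mul_div_cancel_left m hd, nsmul_eq_mul, Nat.cast_sub hm, Nat.cast_mul]
  linear_combination 6 * hinner + 3 * (d : ℤ) * two_mul_sum_Ico_one_natCast d +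
    six_mul_sum_Ico_one_natCast_sq d

theorem twelve_mul_sum_quadruples (n : ℕ) :
    12 * ∑ p ∈ quadruples n, (p.1.1 * p.2.1 : ℤ) = 5 * σ 3 n + σ 1 n - 6 * n * σ 1 n := by
  -- `ψ` is chosen so that its off-diagonal summand is `4ab`, twice the one in `hsplit`
  set ψ : ℕ → ℕ → ℤ := fun a b => a * b - 2 * a ^ 2 with hψ
  have hsplit := sum_quadruples_eq_sum_snd_lt_add_sum_snd_eq n fun a b => (a * b : ℤ)
  have hdiag := sum_quadruples_filter_fst_eq_sub_sum_filter_snd_eq n ψ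
  have hoff : ∑ p ∈ quadruples n with p.1.2 < p.2.2, (ψ p.1.1 p.2.1 + ψ p.2.1 p.1.1 -
      ψ p.2.1 (p.1.1 + p.2.1) - ψ (p.1.1 + p.2.1) p.2.1) =
      2 * ∑ p ∈ quadruples n with p.1.2 < p.2.2, ((p.1.1 * p.2.1 : ℤ) + p.2.1 * p.1.1) := by
    rw [mul_sum]
    exact sum_congr rfl fun p _ => by simp only [hψ]; push_cast; ring
  rw [hoff, sum_quadruples_filter_fst_eq, sum_quadruples_filter_snd_eq] at hdiag
  rw [sum_quadruples_filter_snd_eq n fun a b => (a * b : ℤ)] at hsplit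
  calc 12 * ∑ p ∈ quadruples n, (p.1.1 * p.2.1 : ℤ)
      = 6 * (∑ d ∈ n.divisors, (n / d - 1) • ψ d d -
          ∑ d ∈ n.divisors, ∑ a ∈ Ico 1 d, ψ a (d - a) +
          2 * ∑ d ∈ n.divisors, ∑ a ∈ Ico 1 d, (a * (d - a : ℕ) : ℤ)) := by
        rw [hsplit, hdiag]
        ring
    _ = ∑ d ∈ n.divisors, 6 * ((n / d - 1) • ψ d d - ∑ a ∈ Ico 1 d, ψ a (d - a) +
          2 * ∑ a ∈ Ico 1 d, (a * (d - a : ℕ) : ℤ)) := by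
        simp only [mul_add, mul_sub, sum_add_distrib, sum_sub_distrib, ← mul_sum]
    _ = 5 * σ 3 n + σ 1 n - 6 * n * σ 1 n := by
        rw [sum_congr rfl fun d => six_mul_diagonal_contribution, natCast_sigma_apply,
          natCast_sigma_apply, mul_sum, mul_sum, ← sum_add_distrib, ← sum_sub_distrib]
        simp only [pow_one]

theorem sum_antidiagonal_sigma_one_mul_sigma_one (n : ℕ) :
    ∑ p ∈ antidiagonal n, (σ 1 p.1 * σ 1 p.2 : ℤ) = ∑ p ∈ quadruples n, (p.1.1 * p.2.1 : ℤ) := by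
  have hprod : ∀ p ∈ antidiagonal n, (σ 1 p.1 * σ 1 p.2 : ℤ) =
      ∑ q ∈ p.1.divisors ×ˢ p.2.divisors, (q.1 * q.2 : ℤ) := fun p _ => by
    simp only [natCast_sigma_apply, pow_one, sum_mul_sum, sum_product]
  rw [sum_congr rfl hprod, sum_sigma']
  apply sum_nbij' (fun q => ((q.2.1, q.1.1 / q.2.1), (q.2.2, q.1.2 / q.2.2)))
    (fun p => ⟨(p.1.1 * p.1.2, p.2.1 * p.2.2), (p.1.1, p.2.1)⟩)
  · rintro ⟨⟨i, j⟩, a, b⟩ hq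
    simp only [mem_sigma, HasAntidiagonal.mem_antidiagonal, mem_product, Nat.mem_divisors] at hq
    obtain ⟨rfl, ⟨⟨x, rfl⟩, hi⟩, ⟨y, rfl⟩, hj⟩ := hq
    have ha : 0 < a := Nat.pos_of_ne_zero (by rintro rfl; simp at hi)
    have hb : 0 < b := Nat.pos_of_ne_zero (by rintro rfl; simp at hj)
    simp only [mem_quadruples, Nat.mul_div_cancel_left _ ha, Nat.mul_div_cancel_left _ hb]
    exact ⟨ha, Nat.pos_of_ne_zero (right_ne_zero_of_mul hi), hb,
      Nat.pos_of_ne_zero (right_ne_zero_of_mul hj), trivial⟩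
  · rintro ⟨⟨a, x⟩, b, y⟩ hp
    obtain ⟨ha, hx, hb, hy, rfl⟩ := mem_quadruples.mp hp
    simp only [mem_sigma, HasAntidiagonal.mem_antidiagonal, mem_product, Nat.mem_divisors]
    exact ⟨trivial, ⟨dvd_mul_right a x, by positivity⟩, dvd_mul_right b y, by positivity⟩
  · rintro ⟨⟨i, j⟩, a, b⟩ hq
    simp only [mem_sigma, HasAntidiagonal.mem_antidiagonal, mem_product, Nat.mem_divisors] at hq
    simp [Nat.mul_div_cancel' hq.2.1.1, Nat.mul_div_cancel' hq.2.2.1]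
  · rintro ⟨⟨a, x⟩, b, y⟩ hp
    obtain ⟨ha, -, hb, -, -⟩ := mem_quadruples.mp hp
    simp [Nat.mul_div_cancel_left _ ha, Nat.mul_div_cancel_left _ hb]
  · rintro ⟨⟨i, j⟩, a, b⟩ -
    rfl

theorem twelve_mul_sum_antidiagonal_sigma_one_mul_sigma_one (n : ℕ) :
    12 * ∑ p ∈ antidiagonal n, (σ 1 p.1 * σ 1 p.2 : ℤ) = 5 * σ 3 n + σ 1 n - 6 * n * σ 1 n := by
  rw [sum_antidiagonal_sigma_one_mul_sigma_one, twelve_mul_sum_quadruples]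

end Besge

theorem tsum_add_one_eq_tsum_of_apply_zero {M : Type*} [AddCommMonoid M] [TopologicalSpace M]
    {f : ℕ → M} (hf : f 0 = 0) : ∑' n, f (n + 1) = ∑' n, f n :=
  (add_left_injective 1).tsum_eq fun n hn =>
    ⟨n - 1, Nat.sub_add_cancel (Nat.pos_of_ne_zero fun h => hn (h ▸ hf))⟩

theorem tsum_mul_pow_mul_tsum_mul_pow {R : Type*} [NormedCommRing R] [CompleteSpace R]
    {a b : ℕ → R} {w : R} (ha : Summable fun n => ‖a n * w ^ n‖)
    (hb : Summable fun n => ‖b n * w ^ n‖) :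
    (∑' n, a n * w ^ n) * ∑' n, b n * w ^ n =
      ∑' n, (∑ p ∈ antidiagonal n, a p.1 * b p.2) * w ^ n := by
  rw [tsum_mul_tsum_eq_tsum_sum_antidiagonal_of_summable_norm ha hb]
  refine tsum_congr fun n => ?_
  rw [sum_mul]
  refine sum_congr rfl fun p hp => ?_
  rw [← HasAntidiagonal.mem_antidiagonal.mp hp, pow_add]
  ring

theorem norm_cexp_two_pi_I_mul (z : ℂ) : ‖cexp (2 * π * I * z)‖ = Real.exp (-(2 * π * z.im)) := by
  rw [Complex.norm_exp]
  congr 1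
  simp [Complex.mul_re]

section QSeries

variable {a : ℕ → ℂ} {k : ℕ}

theorem summable_norm_mul_pow_of_norm_le_pow (ha : ∀ n, ‖a n‖ ≤ (n : ℝ) ^ k) {w : ℂ}
    (hw : ‖w‖ < 1) : Summable fun n => ‖a n * w ^ n‖ :=
  (summable_norm_pow_mul_geometric_of_norm_lt_one k hw).of_nonneg_of_le (fun _ => norm_nonneg _)
    fun n => by
      simp only [norm_mul, norm_pow, Complex.norm_natCast]
      exact mul_le_mul_of_nonneg_right (ha n) (by positivity)

theorem hasDerivAt_tsum_mul_cexp_pow (ha : ∀ n, ‖a n‖ ≤ (n : ℝ) ^ k) {τ : ℂ} (hτ : 0 < τ.im) :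
    HasDerivAt (fun z => ∑' n, a n * cexp (2 * π * I * z) ^ n)
      (2 * π * I * ∑' n, n * a n * cexp (2 * π * I * τ) ^ n) τ := by
  set ρ := Real.exp (-(π * τ.im))
  have hρ : ‖ρ‖ < 1 := by
    rw [Real.norm_of_nonneg (Real.exp_nonneg _), Real.exp_lt_one_iff, neg_lt_zero]
    positivity
  have hterm (n : ℕ) (z : ℂ) : HasDerivAt (fun z => a n * cexp (2 * π * I * z) ^ n)
      (2 * π * I * (n * a n * cexp (2 * π * I * z) ^ n)) z := by
    have hlin : HasDerivAt (fun z => 2 * π * I * z) (2 * π * I) z := by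
      simpa using (hasDerivAt_id z).const_mul (2 * π * I)
    refine ((hlin.cexp.fun_pow n).const_mul (a n)).congr_deriv ?_
    rcases n with _ | n
    · simp
    · rw [Nat.add_sub_cancel, pow_succ]
      push_cast
      ring
  have hbound (n : ℕ) (z : ℂ) (hz : z ∈ {z : ℂ | τ.im / 2 < z.im}) :
      ‖2 * π * I * (n * a n * cexp (2 * π * I * z) ^ n)‖ ≤ 2 * π * (n ^ (k + 1) * ρ ^ n) := by
    have hq : ‖cexp (2 * π * I * z)‖ ≤ ρ := by
      rw [norm_cexp_two_pi_I_mul, Real.exp_le_exp]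
      nlinarith [Real.pi_pos, hz.out]
    have h2π : ‖2 * π * I‖ = 2 * π := by simp [Real.pi_pos.le]
    rw [norm_mul, h2π, norm_mul, norm_mul, norm_pow, Complex.norm_natCast, pow_succ']
    gcongr
    exact ha n
  rw [← tsum_mul_left]
  exact hasDerivAt_tsum_of_isPreconnected
    ((summable_pow_mul_geometric_of_norm_lt_one (k + 1) hρ).mul_left (2 * π))
    (isOpen_lt continuous_const Complex.continuous_im)
    (convex_halfSpace_im_gt _).isPreconnected (fun n z _ => hterm n z) hbound
    (half_lt_self hτ)
    (summable_norm_mul_pow_of_norm_le_pow ha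
      (UpperHalfPlane.norm_exp_two_pi_I_lt_one ⟨τ, hτ⟩)).of_norm
    (half_lt_self hτ)

end QSeries

theorem norm_sigma_le (k n : ℕ) : ‖(σ k n : ℂ)‖ ≤ (n : ℝ) ^ (k + 1) := by
  rw [Complex.norm_natCast]
  exact_mod_cast sigma_le_pow_succ k n

theorem E2_eq_tsum (τ : ℂ) : E2 τ = 1 - 24 * ∑' n, (σ 1 n : ℂ) * cexp (2 * π * I * τ) ^ n := by
  rw [E2, tsum_add_one_eq_tsum_of_apply_zero
    (f := fun n => (σ 1 n : ℂ) * cexp (2 * π * I * τ) ^ n) (by simp)]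

theorem E4_eq_tsum (τ : ℂ) : E4 τ = 1 + 240 * ∑' n, (σ 3 n : ℂ) * cexp (2 * π * I * τ) ^ n := by
  rw [E4, tsum_add_one_eq_tsum_of_apply_zero
    (f := fun n => (σ 3 n : ℂ) * cexp (2 * π * I * τ) ^ n) (by simp)]

theorem twelve_mul_tsum_sigma_one_mul_pow_sq {w : ℂ} (hw : ‖w‖ < 1) :
    12 * (∑' n, (σ 1 n : ℂ) * w ^ n) ^ 2 =
      5 * ∑' n, (σ 3 n : ℂ) * w ^ n + ∑' n, (σ 1 n : ℂ) * w ^ n -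
        6 * ∑' n, n * (σ 1 n : ℂ) * w ^ n := by
  have h₁ := summable_norm_mul_pow_of_norm_le_pow (norm_sigma_le 1) hw
  have h₃ := summable_norm_mul_pow_of_norm_le_pow (norm_sigma_le 3) hw
  have hn₁ := summable_norm_mul_pow_of_norm_le_pow (k := 3) (a := fun n => n * (σ 1 n : ℂ))
    (fun n => by
      rw [norm_mul, Complex.norm_natCast, pow_succ']
      exact mul_le_mul_of_nonneg_left (norm_sigma_le 1 n) n.cast_nonneg) hw
  rw [sq, tsum_mul_pow_mul_tsum_mul_pow h₁ h₁, ← tsum_mul_left, ← tsum_mul_left, ← tsum_mul_left,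
    ← (h₃.of_norm.mul_left 5).tsum_add h₁.of_norm,
    ← ((h₃.of_norm.mul_left 5).add h₁.of_norm).tsum_sub (hn₁.of_norm.mul_left 6)]
  refine tsum_congr fun n => ?_
  have h := congrArg (Int.cast : ℤ → ℂ)
    (Besge.twelve_mul_sum_antidiagonal_sigma_one_mul_sigma_one n)
  push_cast at h
  linear_combination w ^ n * h

/-- Ramanujan's identity: (1/2πi) dE₂/dτ = (E₂² − E₄)/12. -/
theorem ramanujan_E2 (τ : ℂ) (hτ : 0 < τ.im) :
    (1 / (2 * (π : ℂ) * Complex.I)) * deriv E2 τ = ((E2 τ) ^ 2 - E4 τ) / 12 := by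
  have hE2 : E2 = fun z => 1 - 24 * ∑' n, (σ 1 n : ℂ) * cexp (2 * π * I * z) ^ n :=
    funext E2_eq_tsum
  have hderiv := ((hasDerivAt_tsum_mul_cexp_pow (norm_sigma_le 1) hτ).const_mul 24).const_sub 1
  rw [← hE2] at hderiv
  have hq : ‖cexp (2 * π * I * τ)‖ < 1 := UpperHalfPlane.norm_exp_two_pi_I_lt_one ⟨τ, hτ⟩
  have h2πI : 2 * (π : ℂ) * I ≠ 0 := by simp [Real.pi_ne_zero]
  rw [hderiv.deriv, E2_eq_tsum, E4_eq_tsum]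
  field_simp
  linear_combination -48 * twelve_mul_tsum_sigma_one_mul_pow_sq hq
end

section
/- The limit of ℘ as τ → i∞: for z ∉ ℤ fixed, lim_{Im(τ)→∞, |Re(τ)|≤1/2} ℘(τ; z) = π²/sin²(πz) − π²/3. -/
open Complex Real

/-- The lattice point m + n·τ indexed by a pair of integers. -/
noncomputable def latticePt (τ : ℂ) (p : ℤ × ℤ) : ℂ := (p.1 : ℂ) + (p.2 : ℂ) * τ

/-- Membership in the lattice Λ_τ = ℤ + ℤτ. -/
def inLattice (τ z : ℂ) : Prop := ∃ m n : ℤ, z = (m : ℂ) + (n : ℂ) * τ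

/-- The Weierstrass ℘ function of the lattice Λ_τ. -/
noncomputable def wp (τ z : ℂ) : ℂ :=
  1 / z ^ 2 + ∑' p : ℤ × ℤ, if p = 0 then 0 else
    (1 / (z - latticePt τ p) ^ 2 - 1 / (latticePt τ p) ^ 2)

/-- The modular invariant g₂(τ) = 60 Σ ω⁻⁴. -/
noncomputable def g2 (τ : ℂ) : ℂ :=
  60 * ∑' p : ℤ × ℤ, if p = 0 then 0 else 1 / (latticePt τ p) ^ 4

/-- The modular invariant g₃(τ) = 140 Σ ω⁻⁶. -/
noncomputable def g3 (τ : ℂ) : ℂ :=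
  140 * ∑' p : ℤ × ℤ, if p = 0 then 0 else 1 / (latticePt τ p) ^ 6

/-- The Weierstrass zeta function of the lattice Λ_τ. -/
noncomputable def wzeta (τ z : ℂ) : ℂ :=
  1 / z + ∑' p : ℤ × ℤ, if p = 0 then 0 else
    (1 / (z - latticePt τ p) + 1 / latticePt τ p + z / (latticePt τ p) ^ 2)

/-!
As `Im τ → ∞` inside the strip `|Re τ| ≤ 1/2`, a lattice point `m + nτ` with `n ≠ 0` has norm at
least `max (|n| Im τ, ‖(m, n)‖ / 2)`, so the summands of `℘` with `n ≠ 0` tend to `0` and are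
dominated by `C ‖(m, n)‖⁻³`. By dominated convergence `℘(τ; z)` tends to the `℘`-function of the
degenerate lattice `ℤ`, namely `1/z² + ∑_{m ≠ 0} (1/(z - m)² - 1/m²)`. Differentiating the
Mittag-Leffler expansion of `π cot (π z)` term by term gives `∑_m 1/(z - m)² = π²/sin²(πz)`, and
Basel's `∑_{m ≠ 0} 1/m² = π²/3` finishes the computation.
-/

open Filter Topology

lemma summable_one_div_nat_add_one_sq : Summable fun m : ℕ => 1 / ((m : ℝ) + 1) ^ 2 := by
  exact_mod_cast (summable_nat_add_iff 1).mpr (Real.summable_one_div_nat_pow.mpr one_lt_two)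

lemma summable_one_div_sub_intCast_sq (z : ℂ) : Summable fun n : ℤ => 1 / (z - n) ^ 2 := by
  refine ((EisensteinSeries.linear_right_summable z 1 (k := 2) le_rfl).comp_injective
    neg_injective).congr fun n => ?_
  simp [sub_eq_add_neg]

lemma norm_one_div_sq_le_of_mul_abs_le {c : ℝ} (hc : 0 < c) {w : ℂ} {n : ℤ} (hn : n ≠ 0)
    (h : c * |(n : ℝ)| ≤ ‖w‖) : ‖1 / w ^ 2‖ ≤ (c ^ 2)⁻¹ * (1 / (n : ℝ) ^ 2) := by
  have hpos : 0 < c * |(n : ℝ)| := by positivity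
  calc ‖1 / w ^ 2‖ = 1 / ‖w‖ ^ 2 := by simp
    _ ≤ 1 / (c * |(n : ℝ)|) ^ 2 := by gcongr
    _ = (c ^ 2)⁻¹ * (1 / (n : ℝ) ^ 2) := by rw [mul_pow, sq_abs]; field_simp

lemma exists_ball_mul_abs_le_norm_sub_intCast {z₀ : ℂ} (hz₀ : z₀ ∈ integerComplement) :
    ∃ c > 0, ∃ δ > 0, ∀ w ∈ Metric.ball z₀ δ, ∀ n : ℤ, c * |(n : ℝ)| ≤ ‖w - n‖ := by
  obtain ⟨ε, hε, hball⟩ := Metric.isOpen_iff.mp Complex.isOpen_compl_range_intCast z₀ hz₀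
  set δ := min ε 1 / 2
  have hδ : 0 < δ := by positivity
  have hδε : δ ≤ ε / 2 := by simp only [δ]; linarith [min_le_left ε 1]
  have hδ1 : δ ≤ 1 / 2 := by simp only [δ]; linarith [min_le_right ε 1]
  refine ⟨δ / (2 * ‖z₀‖ + 2), by positivity, δ, hδ, fun w hw n => ?_⟩
  rw [Metric.mem_ball, dist_eq_norm] at hw
  have hfar : ε ≤ ‖z₀ - n‖ := by
    by_contra! h
    exact hball (by rwa [Metric.mem_ball, dist_eq_norm, norm_sub_rev]) ⟨n, rfl⟩
  -- for small `|n|` the ball stays `δ` away from `n`; for large `|n|` we have `‖w - n‖ ≥ |n| / 2`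
  have hnear : δ ≤ ‖w - n‖ := by
    have := norm_sub_norm_le (z₀ - n) (z₀ - w)
    rw [sub_sub_sub_cancel_left, norm_sub_rev z₀ w] at this
    linarith
  have hlin : |(n : ℝ)| - ‖w‖ ≤ ‖w - n‖ := by
    have := norm_sub_norm_le (n : ℂ) w
    rwa [norm_sub_rev, ← Complex.ofReal_intCast, Complex.norm_real, Real.norm_eq_abs] at this
  have hw1 : ‖w‖ ≤ ‖z₀‖ + 1 := by linarith [norm_le_norm_add_norm_sub' w z₀]
  rw [div_mul_eq_mul_div, div_le_iff₀ (by positivity)]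
  rcases le_total |(n : ℝ)| (2 * ‖z₀‖ + 2) with h | h
  · nlinarith [mul_le_mul_of_nonneg_left h hδ.le, norm_nonneg z₀]
  · nlinarith [norm_nonneg z₀, abs_nonneg (n : ℝ)]

lemma hasDerivAt_one_div_sub {z a : ℂ} (h : z ≠ a) :
    HasDerivAt (fun x : ℂ => 1 / (x - a)) (-(1 / (z - a) ^ 2)) z := by
  simpa [Function.comp_def, one_div] using
    (hasDerivAt_inv (sub_ne_zero.mpr h)).comp z ((hasDerivAt_id z).sub_const a)

lemma hasDerivAt_pi_mul_cot_pi_mul {z : ℂ} (hz : Complex.sin (π * z) ≠ 0) :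
    HasDerivAt (fun x : ℂ => π * Complex.cot (π * x)) (-(π ^ 2 / Complex.sin (π * z) ^ 2)) z := by
  have hlin : HasDerivAt (fun x : ℂ => π * x) π z := by
    simpa using (hasDerivAt_id z).const_mul (π : ℂ)
  have hquot := (((Complex.hasDerivAt_cos _).comp z hlin).div
    ((Complex.hasDerivAt_sin _).comp z hlin) hz).const_mul (π : ℂ)
  simp only [Function.comp_def, Pi.div_apply, ← Complex.cot_eq_cos_div_sin] at hquot
  refine hquot.congr_deriv ?_
  field_simp
  linear_combination -Complex.sin_sq_add_cos_sq (π * z)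

lemma norm_deriv_cotTerm_le {c : ℝ} (hc : 0 < c) {w : ℂ}
    (hw : ∀ n : ℤ, c * |(n : ℝ)| ≤ ‖w - n‖) (m : ℕ) :
    ‖-(1 / (w - (m + 1)) ^ 2 + 1 / (w + (m + 1)) ^ 2)‖ ≤
      2 * (c ^ 2)⁻¹ * (1 / ((m : ℝ) + 1) ^ 2) := by
  have hsub := norm_one_div_sq_le_of_mul_abs_le hc (n := m + 1) (by omega) (hw (m + 1))
  have hadd := norm_one_div_sq_le_of_mul_abs_le hc (n := -(m + 1)) (by omega) (hw (-(m + 1)))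
  push_cast at hsub hadd
  rw [sub_neg_eq_add, neg_sq] at hadd
  rw [norm_neg]
  linarith [norm_add_le (1 / (w - (m + 1)) ^ 2) (1 / (w + (m + 1)) ^ 2)]

lemma hasDerivAt_tsum_cotTerm {z : ℂ} (hz : z ∈ integerComplement) :
    HasDerivAt (fun x => ∑' m : ℕ, cotTerm x m)
      (∑' m : ℕ, -(1 / (z - (m + 1)) ^ 2 + 1 / (z + (m + 1)) ^ 2)) z := by
  obtain ⟨c, hc, δ, hδ, hball⟩ := exists_ball_mul_abs_le_norm_sub_intCast hz
  refine hasDerivAt_tsum_of_isPreconnected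
    (summable_one_div_nat_add_one_sq.mul_left (2 * (c ^ 2)⁻¹)) Metric.isOpen_ball
    (convex_ball z δ).isPreconnected (fun m w hw => ?_)
    (fun m w hw => norm_deriv_cotTerm_le hc (hball w hw) m)
    (Metric.mem_ball_self hδ) (summable_cotTerm hz) (Metric.mem_ball_self hδ)
  have hne (n : ℤ) (hn : n ≠ 0) : w ≠ n := fun h => by
    have := hball w hw n
    rw [h, sub_self, norm_zero] at this
    have : 0 < c * |(n : ℝ)| := by positivity
    linarith
  have hminus := hasDerivAt_one_div_sub (hne (m + 1) (by omega))
  have hplus := hasDerivAt_one_div_sub (hne (-(m + 1)) (by omega))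
  push_cast at hminus hplus
  simp only [sub_neg_eq_add] at hplus
  exact (hminus.add hplus).congr_deriv (by ring)

theorem hasSum_one_div_sub_intCast_sq {z : ℂ} (hz : z ∈ integerComplement) :
    HasSum (fun n : ℤ => 1 / (z - n) ^ 2) (π ^ 2 / Complex.sin (π * z) ^ 2) := by
  have hcot : HasDerivAt (fun x => π * Complex.cot (π * x) - 1 / x)
      (-(π ^ 2 / Complex.sin (π * z) ^ 2) - -(1 / z ^ 2)) z := by
    simpa using (hasDerivAt_pi_mul_cot_pi_mul (sin_pi_mul_ne_zero hz)).fun_sub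
      (hasDerivAt_one_div_sub (a := 0) (integerComplement.ne_zero hz))
  have hcot_eq : (fun x => π * Complex.cot (π * x) - 1 / x) =ᶠ[𝓝 z]
      fun x => ∑' m : ℕ, cotTerm x m := by
    filter_upwards [Complex.isOpen_compl_range_intCast.mem_nhds hz] with x hx
    exact cot_series_rep' hx
  have hderiv := hcot.unique ((hasDerivAt_tsum_cotTerm hz).congr_of_eventuallyEq hcot_eq)
  set f : ℤ → ℂ := fun n => 1 / (z - n) ^ 2
  have hS : Summable f := summable_one_div_sub_intCast_sq z
  have h₁ : Summable fun m : ℕ => f (m + 1) := hS.comp_injective fun a b h => by simpa using h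
  have h₂ : Summable fun m : ℕ => f (-(m + 1)) := hS.comp_injective fun a b h => by simpa using h
  have hsplit : ∑' m : ℕ, (1 / (z - (m + 1)) ^ 2 + 1 / (z + (m + 1)) ^ 2) =
      ∑' m : ℕ, f (m + 1) + ∑' m : ℕ, f (-(m + 1)) := by
    rw [← h₁.tsum_add h₂]
    refine tsum_congr fun m => ?_
    simp only [f]
    push_cast
    ring
  rw [tsum_neg, hsplit] at hderiv
  convert h₁.hasSum.of_add_one_of_neg_add_one h₂.hasSum using 1
  simp only [f, Int.cast_zero, sub_zero]
  linear_combination -hderiv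

theorem hasSum_one_div_intCast_sq :
    HasSum (fun n : ℤ => 1 / (n : ℂ) ^ 2) ((π : ℂ) ^ 2 / 3) := by
  have hnat : HasSum (fun n : ℕ => 1 / (n : ℂ) ^ 2) ((π : ℂ) ^ 2 / 6) := by
    have := Complex.hasSum_ofReal.mpr hasSum_zeta_two
    push_cast at this
    exact this
  -- the `n = 0` term is `1 / 0 = 0`
  have hsucc : HasSum (fun n : ℕ => 1 / ((n : ℂ) + 1) ^ 2) ((π : ℂ) ^ 2 / 6) := by
    simpa using (hasSum_nat_add_iff' 1).mpr hnat
  have hneg : HasSum (fun n : ℕ => 1 / (((-(n + 1) : ℤ)) : ℂ) ^ 2) ((π : ℂ) ^ 2 / 6) := by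
    simpa only [Int.cast_neg, Int.cast_add, Int.cast_natCast, Int.cast_one, neg_sq] using hsucc
  convert hnat.of_nat_of_neg_add_one (f := fun n : ℤ => 1 / (n : ℂ) ^ 2) hneg using 1
  ring

noncomputable def wpIntSummand (z : ℂ) (m : ℤ) : ℂ :=
  if m = 0 then 0 else 1 / (z - m) ^ 2 - 1 / (m : ℂ) ^ 2

theorem hasSum_wpIntSummand {z : ℂ} (hz : z ∈ integerComplement) :
    HasSum (wpIntSummand z)
      (π ^ 2 / Complex.sin (π * z) ^ 2 - (π : ℂ) ^ 2 / 3 - 1 / z ^ 2) := by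
  have h := hasSum_ite_sub_hasSum
    ((hasSum_one_div_sub_intCast_sq hz).sub hasSum_one_div_intCast_sq) 0
  simp only [Int.cast_zero, sub_zero, ne_eq, OfNat.ofNat_ne_zero, not_false_eq_true,
    zero_pow, div_zero] at h
  exact h

lemma norm_one_div_sub_sq_sub_one_div_sq_le {z ω : ℂ} (h : 2 * ‖z‖ ≤ ‖ω‖) :
    ‖1 / (z - ω) ^ 2 - 1 / ω ^ 2‖ ≤ 10 * ‖z‖ / ‖ω‖ ^ 3 := by
  rcases eq_or_ne ω 0 with rfl | hω
  · rw [norm_zero] at h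
    obtain rfl : z = 0 := norm_eq_zero.mp (by linarith [norm_nonneg z])
    simp
  have hωpos : 0 < ‖ω‖ := norm_pos_iff.mpr hω
  have hsub : ‖ω‖ / 2 ≤ ‖z - ω‖ := by
    linarith [norm_sub_norm_le ω z, norm_sub_rev ω z]
  have hzω : z - ω ≠ 0 := norm_pos_iff.mp (by linarith)
  have hnum : ‖2 * ω - z‖ ≤ 5 / 2 * ‖ω‖ := by
    have := norm_sub_le (2 * ω) z
    rw [norm_mul, Complex.norm_ofNat] at this
    linarith
  have hid : 1 / (z - ω) ^ 2 - 1 / ω ^ 2 = z * (2 * ω - z) / ((z - ω) ^ 2 * ω ^ 2) := by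
    field_simp
    ring
  rw [hid, norm_div, norm_mul, norm_mul, norm_pow, norm_pow]
  calc ‖z‖ * ‖2 * ω - z‖ / (‖z - ω‖ ^ 2 * ‖ω‖ ^ 2)
      ≤ ‖z‖ * (5 / 2 * ‖ω‖) / ((‖ω‖ / 2) ^ 2 * ‖ω‖ ^ 2) := by gcongr
    _ = 10 * ‖z‖ / ‖ω‖ ^ 3 := by field_simp; ring

lemma summable_norm_rpow_neg_of_two_lt {k : ℝ} (hk : 2 < k) :
    Summable fun p : ℤ × ℤ => ‖p‖ ^ (-k) := by
  refine ((EisensteinSeries.summable_one_div_norm_rpow hk).comp_injective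
    (finTwoArrowEquiv ℤ).symm.injective).congr fun p => ?_
  simp [EisensteinSeries.norm_eq_max_natAbs, Prod.norm_def, Int.norm_eq_abs]

lemma latticePt_re (τ : ℂ) (p : ℤ × ℤ) : (latticePt τ p).re = p.1 + p.2 * τ.re := by
  simp [latticePt]

lemma latticePt_im (τ : ℂ) (p : ℤ × ℤ) : (latticePt τ p).im = p.2 * τ.im := by
  simp [latticePt]

lemma im_le_norm_latticePt {τ : ℂ} (hτ : 0 ≤ τ.im) {p : ℤ × ℤ} (hp : p.2 ≠ 0) :
    τ.im ≤ ‖latticePt τ p‖ := by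
  have h1 : (1 : ℝ) ≤ |(p.2 : ℝ)| := by exact_mod_cast Int.one_le_abs hp
  have h2 := abs_im_le_norm (latticePt τ p)
  rw [latticePt_im, abs_mul, abs_of_nonneg hτ] at h2
  nlinarith

lemma norm_le_two_mul_norm_latticePt {τ : ℂ} (hre : |τ.re| ≤ 1 / 2) (him : 1 ≤ τ.im)
    (p : ℤ × ℤ) : ‖p‖ ≤ 2 * ‖latticePt τ p‖ := by
  have hi := abs_im_le_norm (latticePt τ p)
  have hr := abs_re_le_norm (latticePt τ p)
  rw [latticePt_im, abs_mul, abs_of_pos (by linarith : 0 < τ.im)] at hi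
  rw [latticePt_re] at hr
  have h2 : |(p.2 : ℝ)| ≤ ‖latticePt τ p‖ := by nlinarith [abs_nonneg (p.2 : ℝ)]
  have h1 : |(p.1 : ℝ)| - |(p.2 : ℝ)| / 2 ≤ ‖latticePt τ p‖ := by
    have : |(p.2 : ℝ) * τ.re| ≤ |(p.2 : ℝ)| / 2 := by
      rw [abs_mul]; nlinarith [abs_nonneg (p.2 : ℝ)]
    have := abs_sub ((p.1 : ℝ) + p.2 * τ.re) ((p.2 : ℝ) * τ.re)
    rw [add_sub_cancel_right] at this
    linarith
  rw [Prod.norm_def, Int.norm_eq_abs, Int.norm_eq_abs, max_le_iff]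
  constructor <;> linarith [norm_nonneg (latticePt τ p)]

noncomputable def wpSummand (τ z : ℂ) (p : ℤ × ℤ) : ℂ :=
  if p = 0 then 0 else 1 / (z - latticePt τ p) ^ 2 - 1 / (latticePt τ p) ^ 2

lemma wpSummand_of_snd_eq_zero (τ z : ℂ) {p : ℤ × ℤ} (hp : p.2 = 0) :
    wpSummand τ z p = wpIntSummand z p.1 := by
  obtain ⟨m, n⟩ := p
  obtain rfl : n = 0 := hp
  simp [wpSummand, wpIntSummand, latticePt, Prod.ext_iff]

lemma norm_wpSummand_le {τ z : ℂ} (hre : |τ.re| ≤ 1 / 2) (him : 1 ≤ τ.im)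
    (hz : 2 * ‖z‖ ≤ τ.im) {p : ℤ × ℤ} (hp : p.2 ≠ 0) :
    ‖wpSummand τ z p‖ ≤ 80 * ‖z‖ * ‖p‖ ^ (-3 : ℝ) := by
  have hp0 : p ≠ 0 := fun h => hp (by simp [h])
  have hω := im_le_norm_latticePt (by linarith) hp
  have hpω := norm_le_two_mul_norm_latticePt hre him p
  have hppos : 0 < ‖p‖ := norm_pos_iff.mpr hp0
  rw [wpSummand, if_neg hp0, Real.rpow_neg hppos.le, Real.rpow_ofNat]
  calc _ ≤ 10 * ‖z‖ / ‖latticePt τ p‖ ^ 3 := norm_one_div_sub_sq_sub_one_div_sq_le (by linarith)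
    _ ≤ 10 * ‖z‖ / (‖p‖ / 2) ^ 3 := by gcongr; linarith
    _ = 80 * ‖z‖ * (‖p‖ ^ 3)⁻¹ := by field_simp; ring

lemma tendsto_wpSummand (z : ℂ) (p : ℤ × ℤ) :
    Tendsto (fun τ => wpSummand τ z p) (comap im atTop)
      (𝓝 (if p.2 = 0 then wpIntSummand z p.1 else 0)) := by
  split_ifs with hp
  · simp only [wpSummand_of_snd_eq_zero _ z hp]
    exact tendsto_const_nhds
  have hp0 : p ≠ 0 := fun h => hp (by simp [h])
  have hdecay : Tendsto (fun τ : ℂ => 10 * ‖z‖ / τ.im ^ 3) (comap im atTop) (𝓝 0) :=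
    tendsto_const_nhds.div_atTop ((tendsto_pow_atTop three_ne_zero).comp tendsto_comap)
  refine squeeze_zero_norm' ?_ hdecay
  filter_upwards [tendsto_comap.eventually (eventually_ge_atTop (max 1 (2 * ‖z‖)))] with τ hτ
  obtain ⟨him, hz⟩ := max_le_iff.mp hτ
  have hω := im_le_norm_latticePt (by linarith) hp
  have : 0 < τ.im := by linarith
  rw [wpSummand, if_neg hp0]
  calc _ ≤ 10 * ‖z‖ / ‖latticePt τ p‖ ^ 3 := norm_one_div_sub_sq_sub_one_div_sq_le (by linarith)
    _ ≤ 10 * ‖z‖ / τ.im ^ 3 := by gcongr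

theorem hasSum_wpSummand_limit {z : ℂ} (hz : z ∈ integerComplement) :
    HasSum (fun p : ℤ × ℤ => if p.2 = 0 then wpIntSummand z p.1 else 0)
      (π ^ 2 / Complex.sin (π * z) ^ 2 - (π : ℂ) ^ 2 / 3 - 1 / z ^ 2) := by
  have hinj : Function.Injective fun m : ℤ => (m, (0 : ℤ)) := fun a b h => (Prod.ext_iff.mp h).1
  refine (hinj.hasSum_iff fun p hp => ?_).mp ?_
  · exact if_neg fun h => hp ⟨p.1, Prod.ext rfl h.symm⟩
  · simpa [Function.comp_def] using hasSum_wpIntSummand hz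

/-- As Im τ → ∞ with |Re τ| ≤ 1/2, ℘(τ; z) → π²/sin²(πz) − π²/3, for fixed z ∉ ℤ. -/
theorem wp_limit_at_i_infty (z : ℂ) (hz : ∀ n : ℤ, z ≠ (n : ℂ)) :
    Filter.Tendsto (fun τ : ℂ => wp τ z)
      (Filter.comap Complex.im Filter.atTop ⊓ Filter.principal {τ : ℂ | |τ.re| ≤ 1 / 2})
      (nhds ((π : ℂ) ^ 2 / Complex.sin ((π : ℂ) * z) ^ 2 - (π : ℂ) ^ 2 / 3)) := by
  set G := fun p : ℤ × ℤ => if p.2 = 0 then wpIntSummand z p.1 else 0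
  have hG := hasSum_wpSummand_limit (z := z) fun ⟨n, hn⟩ => hz n hn.symm
  have hdom : ∀ᶠ τ in comap im atTop ⊓ 𝓟 {τ : ℂ | |τ.re| ≤ 1 / 2}, ∀ p,
      ‖wpSummand τ z p‖ ≤ ‖G p‖ + 80 * ‖z‖ * ‖p‖ ^ (-3 : ℝ) := by
    filter_upwards [(tendsto_comap.eventually (eventually_ge_atTop (max 1 (2 * ‖z‖)))).filter_mono
      inf_le_left, mem_inf_of_right (mem_principal_self _)] with τ hτ hre p
    obtain ⟨him, hzτ⟩ := max_le_iff.mp hτ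
    by_cases hp : p.2 = 0
    · simp only [wpSummand_of_snd_eq_zero τ z hp, G, if_pos hp]
      exact le_add_of_nonneg_right (by positivity)
    · simpa only [G, if_neg hp, norm_zero, zero_add] using norm_wpSummand_le hre him hzτ hp
  have hlim := tendsto_tsum_of_dominated_convergence
    ((summable_norm_iff.mpr hG.summable).add
      ((summable_norm_rpow_neg_of_two_lt (by norm_num : (2 : ℝ) < 3)).mul_left (80 * ‖z‖)))
    (fun p => (tendsto_wpSummand z p).mono_left inf_le_left) hdom
  rw [hG.tsum_eq] at hlim
  have hwp : (fun τ => wp τ z) = fun τ => 1 / z ^ 2 + ∑' p, wpSummand τ z p := rfl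
  rw [hwp, show (π : ℂ) ^ 2 / Complex.sin (π * z) ^ 2 - (π : ℂ) ^ 2 / 3 =
    1 / z ^ 2 + (π ^ 2 / Complex.sin (π * z) ^ 2 - (π : ℂ) ^ 2 / 3 - 1 / z ^ 2) by ring]
  exact tendsto_const_nhds.add hlim
end
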